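/- Let U ⊆ ℝ² be open and let u : ℝ² → ℝ be infinitely differentiable on U. Suppose that at every point of U one has u_xx·u_yy − u_xy² > 0 and u satisfies the system u_xx²·u_yyy − 3·u_xx·u_yy·u_xxy + 2·u_xy·u_yy·u_xxx = 0 and u_yy²·u_xxx − 3·u_xx·u_yy·u_xyy + 2·u_xy·u_xx·u_yyy = 0. Then at every point of U there exist real numbers β₁₁, β₁₂, β₂₂ such that u_xxxx = β₁₁·u_xx, 4·u_xxxy = 2·β₁₁·u_xy + 2·β₁₂·u_xx, 6·u_xxyy = β₁₁·u_yy + 4·β₁₂·u_xy + β₂₂·u_xx, 4·u_xyyy = 2·β₁₂·u_yy + 2·β₂₂·u_xy, and u_yyyy = β₂₂·u_yy; that is, the symmetric quartic form of fourth derivatives u_xxxx·dx⁴ + 4u_xxxy·dx³dy + 6u_xxyy·dx²dy² + 4u_xyyy·dxdy³ + u_yyyy·dy⁴ is the product of a quadratic form with the Hessian form u_xx·dx² + 2u_xy·dxdy + u_yy·dy². -/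

import Mathlib

noncomputable section

/-- Partial derivative with respect to the first variable `x`. -/
def px (f : ℝ × ℝ → ℝ) : ℝ × ℝ → ℝ := fun p => deriv (fun t => f (t, p.2)) p.1

/-- Partial derivative with respect to the second variable `y`. -/
def py (f : ℝ × ℝ → ℝ) : ℝ × ℝ → ℝ := fun p => deriv (fun t => f (p.1, t)) p.2

lemma slice_x_mem {U : Set (ℝ × ℝ)} (hU : IsOpen U) {p : ℝ × ℝ} (hp : p ∈ U) :
    ∀ᶠ t in nhds p.1, (t, p.2) ∈ U := by
  have hc : Continuous fun t : ℝ => (t, p.2) := by fun_prop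
  have := (hU.preimage hc).mem_nhds (by simpa using hp)
  exact this

lemma slice_y_mem {U : Set (ℝ × ℝ)} (hU : IsOpen U) {p : ℝ × ℝ} (hp : p ∈ U) :
    ∀ᶠ t in nhds p.2, (p.1, t) ∈ U := by
  have hc : Continuous fun t : ℝ => (p.1, t) := by fun_prop
  have := (hU.preimage hc).mem_nhds (by simpa using hp)
  exact this

lemma px_congr {U : Set (ℝ × ℝ)} (hU : IsOpen U) {f g : ℝ × ℝ → ℝ}
    (h : ∀ z ∈ U, f z = g z) {p : ℝ × ℝ} (hp : p ∈ U) : px f p = px g p := by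
  apply Filter.EventuallyEq.deriv_eq
  filter_upwards [slice_x_mem hU hp] with t ht
  exact h _ ht

lemma py_congr {U : Set (ℝ × ℝ)} (hU : IsOpen U) {f g : ℝ × ℝ → ℝ}
    (h : ∀ z ∈ U, f z = g z) {p : ℝ × ℝ} (hp : p ∈ U) : py f p = py g p := by
  apply Filter.EventuallyEq.deriv_eq
  filter_upwards [slice_y_mem hU hp] with t ht
  exact h _ ht

lemma px_eq_zero {U : Set (ℝ × ℝ)} (hU : IsOpen U) {f : ℝ × ℝ → ℝ}
    (h : ∀ z ∈ U, f z = 0) {p : ℝ × ℝ} (hp : p ∈ U) : px f p = 0 := by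
  have := px_congr hU (g := fun _ => (0:ℝ)) h hp
  simpa [px] using this

lemma py_eq_zero {U : Set (ℝ × ℝ)} (hU : IsOpen U) {f : ℝ × ℝ → ℝ}
    (h : ∀ z ∈ U, f z = 0) {p : ℝ × ℝ} (hp : p ∈ U) : py f p = 0 := by
  have := py_congr hU (g := fun _ => (0:ℝ)) h hp
  simpa [py] using this

lemma hasDerivAt_slice_x {f : ℝ × ℝ → ℝ} {p : ℝ × ℝ} (hf : DifferentiableAt ℝ f p) :
    HasDerivAt (fun t => f (t, p.2)) (fderiv ℝ f p (1, 0)) p.1 := by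
  have h1 : HasDerivAt (fun t : ℝ => (t, p.2)) ((1 : ℝ), (0 : ℝ)) p.1 :=
    (hasDerivAt_id p.1).prodMk (hasDerivAt_const p.1 p.2)
  have h2 : HasFDerivAt f (fderiv ℝ f p) ((fun t : ℝ => (t, p.2)) p.1) := by
    simpa using hf.hasFDerivAt
  exact h2.comp_hasDerivAt p.1 h1

lemma hasDerivAt_slice_y {f : ℝ × ℝ → ℝ} {p : ℝ × ℝ} (hf : DifferentiableAt ℝ f p) :
    HasDerivAt (fun t => f (p.1, t)) (fderiv ℝ f p (0, 1)) p.2 := by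
  have h1 : HasDerivAt (fun t : ℝ => (p.1, t)) ((0 : ℝ), (1 : ℝ)) p.2 :=
    (hasDerivAt_const p.2 p.1).prodMk (hasDerivAt_id p.2)
  have h2 : HasFDerivAt f (fderiv ℝ f p) ((fun t : ℝ => (p.1, t)) p.2) := by
    simpa using hf.hasFDerivAt
  exact h2.comp_hasDerivAt p.2 h1

lemma px_eq_fderiv {f : ℝ × ℝ → ℝ} {p : ℝ × ℝ} (hf : DifferentiableAt ℝ f p) :
    px f p = fderiv ℝ f p (1, 0) := (hasDerivAt_slice_x hf).deriv

lemma py_eq_fderiv {f : ℝ × ℝ → ℝ} {p : ℝ × ℝ} (hf : DifferentiableAt ℝ f p) :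
    py f p = fderiv ℝ f p (0, 1) := (hasDerivAt_slice_y hf).deriv

lemma hasDerivAt_px {f : ℝ × ℝ → ℝ} {p : ℝ × ℝ} (hf : DifferentiableAt ℝ f p) :
    HasDerivAt (fun t => f (t, p.2)) (px f p) p.1 := by
  rw [px_eq_fderiv hf]; exact hasDerivAt_slice_x hf

lemma hasDerivAt_py {f : ℝ × ℝ → ℝ} {p : ℝ × ℝ} (hf : DifferentiableAt ℝ f p) :
    HasDerivAt (fun t => f (p.1, t)) (py f p) p.2 := by
  rw [py_eq_fderiv hf]; exact hasDerivAt_slice_y hf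

lemma diffAt {U : Set (ℝ × ℝ)} (hU : IsOpen U) {f : ℝ × ℝ → ℝ}
    (hf : ContDiffOn ℝ (⊤ : ℕ∞) f U) {p : ℝ × ℝ} (hp : p ∈ U) : DifferentiableAt ℝ f p :=
  (hf.contDiffAt (hU.mem_nhds hp)).differentiableAt (by simp)

lemma contDiffOn_px {U : Set (ℝ × ℝ)} (hU : IsOpen U) {f : ℝ × ℝ → ℝ}
    (hf : ContDiffOn ℝ (⊤ : ℕ∞) f U) : ContDiffOn ℝ (⊤ : ℕ∞) (px f) U := by
  have h1 : ContDiffOn ℝ (⊤ : ℕ∞) (fderiv ℝ f) U := hf.fderiv_of_isOpen hU (by simp)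
  have h2 : ContDiffOn ℝ (⊤ : ℕ∞) (fun z => fderiv ℝ f z (1, 0)) U := h1.clm_apply contDiffOn_const
  exact h2.congr fun z hz => px_eq_fderiv (diffAt hU hf hz)

lemma contDiffOn_py {U : Set (ℝ × ℝ)} (hU : IsOpen U) {f : ℝ × ℝ → ℝ}
    (hf : ContDiffOn ℝ (⊤ : ℕ∞) f U) : ContDiffOn ℝ (⊤ : ℕ∞) (py f) U := by
  have h1 : ContDiffOn ℝ (⊤ : ℕ∞) (fderiv ℝ f) U := hf.fderiv_of_isOpen hU (by simp)
  have h2 : ContDiffOn ℝ (⊤ : ℕ∞) (fun z => fderiv ℝ f z (0, 1)) U := h1.clm_apply contDiffOn_const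
  exact h2.congr fun z hz => py_eq_fderiv (diffAt hU hf hz)

lemma px_py_swap {U : Set (ℝ × ℝ)} (hU : IsOpen U) {f : ℝ × ℝ → ℝ}
    (hf : ContDiffOn ℝ (⊤ : ℕ∞) f U) : ∀ p ∈ U, px (py f) p = py (px f) p := by
  intro p hp
  have hD : ContDiffOn ℝ (⊤ : ℕ∞) (fderiv ℝ f) U := hf.fderiv_of_isOpen hU (by simp)
  have hDp : DifferentiableAt ℝ (fderiv ℝ f) p :=
    (hD.contDiffAt (hU.mem_nhds hp)).differentiableAt (by simp)
  have h1 : px (py f) p = px (fun z => fderiv ℝ f z (0, 1)) p :=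
    px_congr hU (fun z hz => py_eq_fderiv (diffAt hU hf hz)) hp
  have h1' : py (px f) p = py (fun z => fderiv ℝ f z (1, 0)) p :=
    py_congr hU (fun z hz => px_eq_fderiv (diffAt hU hf hz)) hp
  have h2 : px (fun z => fderiv ℝ f z (0, 1)) p
      = fderiv ℝ (fun z => fderiv ℝ f z (0, 1)) p (1, 0) :=
    px_eq_fderiv (hDp.clm_apply (differentiableAt_const _))
  have h2' : py (fun z => fderiv ℝ f z (1, 0)) p
      = fderiv ℝ (fun z => fderiv ℝ f z (1, 0)) p (0, 1) :=
    py_eq_fderiv (hDp.clm_apply (differentiableAt_const _))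
  have h3 : fderiv ℝ (fun z => fderiv ℝ f z (0, 1)) p (1, 0)
      = fderiv ℝ (fderiv ℝ f) p (1, 0) (0, 1) := by
    rw [fderiv_clm_apply hDp (differentiableAt_const _)]
    simp
  have h3' : fderiv ℝ (fun z => fderiv ℝ f z (1, 0)) p (0, 1)
      = fderiv ℝ (fderiv ℝ f) p (0, 1) (1, 0) := by
    rw [fderiv_clm_apply hDp (differentiableAt_const _)]
    simp
  have hsym : fderiv ℝ (fderiv ℝ f) p (1, 0) (0, 1) = fderiv ℝ (fderiv ℝ f) p (0, 1) (1, 0) :=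
    (hf.contDiffAt (hU.mem_nhds hp)).isSymmSndFDerivAt (by rw [minSmoothness_of_isRCLikeNormedField]; exact WithTop.coe_le_coe.mpr le_top) (1, 0) (0, 1)
  rw [h1, h2, h3, hsym, h1', h2', h3']



lemma key_x {U : Set (ℝ × ℝ)} (hU : IsOpen U) (F : ℝ × ℝ → ℝ) (hF : ∀ z ∈ U, F z = 0)
    {p : ℝ × ℝ} (hp : p ∈ U) {D : ℝ} (hd : HasDerivAt (fun t => F (t, p.2)) D p.1) : D = 0 := by
  have h1 : px F p = 0 := px_eq_zero hU hF hp
  have h2 : deriv (fun t => F (t, p.2)) p.1 = D := hd.deriv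
  rw [← h2]; exact h1

lemma key_y {U : Set (ℝ × ℝ)} (hU : IsOpen U) (F : ℝ × ℝ → ℝ) (hF : ∀ z ∈ U, F z = 0)
    {p : ℝ × ℝ} (hp : p ∈ U) {D : ℝ} (hd : HasDerivAt (fun t => F (p.1, t)) D p.2) : D = 0 := by
  have h1 : py F p = 0 := py_eq_zero hU hF hp
  have h2 : deriv (fun t => F (p.1, t)) p.2 = D := hd.deriv
  rw [← h2]; exact h1

theorem stmt14 (U : Set (ℝ × ℝ)) (hU : IsOpen U) (u : ℝ × ℝ → ℝ)
    (hu : ContDiffOn ℝ (⊤ : ℕ∞) u U)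
    (hpos : ∀ p ∈ U,
      px (px u) p * py (py u) p - (py (px u) p)^2 > 0)
    (heq1 : ∀ p ∈ U,
      (px (px u) p)^2 * py (py (py u)) p
        - 3 * px (px u) p * py (py u) p * py (px (px u)) p
        + 2 * py (px u) p * py (py u) p * px (px (px u)) p = 0)
    (heq2 : ∀ p ∈ U,
      (py (py u) p)^2 * px (px (px u)) p
        - 3 * px (px u) p * py (py u) p * py (py (px u)) p
        + 2 * py (px u) p * px (px u) p * py (py (py u)) p = 0) :
    ∀ p ∈ U, ∃ β₁₁ β₁₂ β₂₂ : ℝ,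
      px (px (px (px u))) p = β₁₁ * px (px u) p ∧
      4 * py (px (px (px u))) p = 2 * β₁₁ * py (px u) p + 2 * β₁₂ * px (px u) p ∧
      6 * py (py (px (px u))) p
        = β₁₁ * py (py u) p + 4 * β₁₂ * py (px u) p + β₂₂ * px (px u) p ∧
      4 * py (py (py (px u))) p = 2 * β₁₂ * py (py u) p + 2 * β₂₂ * py (px u) p ∧
      py (py (py (py u))) p = β₂₂ * py (py u) p := by
  intro p hp
  -- smoothness of iterated partials on U
  have s_x : ContDiffOn ℝ (⊤ : ℕ∞) (px u) U := contDiffOn_px hU hu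
  have s_y : ContDiffOn ℝ (⊤ : ℕ∞) (py u) U := contDiffOn_py hU hu
  have s_xx : ContDiffOn ℝ (⊤ : ℕ∞) (px (px u)) U := contDiffOn_px hU s_x
  have s_xy : ContDiffOn ℝ (⊤ : ℕ∞) (py (px u)) U := contDiffOn_py hU s_x
  have s_yy : ContDiffOn ℝ (⊤ : ℕ∞) (py (py u)) U := contDiffOn_py hU s_y
  have s_xxx : ContDiffOn ℝ (⊤ : ℕ∞) (px (px (px u))) U := contDiffOn_px hU s_xx
  have s_xxy : ContDiffOn ℝ (⊤ : ℕ∞) (py (px (px u))) U := contDiffOn_py hU s_xx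
  have s_xyy : ContDiffOn ℝ (⊤ : ℕ∞) (py (py (px u))) U := contDiffOn_py hU s_xy
  have s_yyy : ContDiffOn ℝ (⊤ : ℕ∞) (py (py (py u))) U := contDiffOn_py hU s_yy
  -- differentiability at p
  have dA : DifferentiableAt ℝ (px (px u)) p := diffAt hU s_xx hp
  have dB : DifferentiableAt ℝ (py (px u)) p := diffAt hU s_xy hp
  have dC : DifferentiableAt ℝ (py (py u)) p := diffAt hU s_yy hp
  have dp3 : DifferentiableAt ℝ (px (px (px u))) p := diffAt hU s_xxx hp
  have dq3 : DifferentiableAt ℝ (py (px (px u))) p := diffAt hU s_xxy hp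
  have dr3 : DifferentiableAt ℝ (py (py (px u))) p := diffAt hU s_xyy hp
  have ds3 : DifferentiableAt ℝ (py (py (py u))) p := diffAt hU s_yyy hp
  -- symmetry of mixed partials, in canonical form
  have sw0 : ∀ z ∈ U, px (py u) z = py (px u) z := px_py_swap hU hu
  have sw1 : ∀ z ∈ U, px (py (px u)) z = py (px (px u)) z := px_py_swap hU s_x
  have sw2 : ∀ z ∈ U, px (py (py u)) z = py (py (px u)) z := by
    intro z hz
    calc px (py (py u)) z = py (px (py u)) z := px_py_swap hU s_y z hz
    _ = py (py (px u)) z := py_congr hU sw0 hz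
  have sw3 : ∀ z ∈ U, px (py (py (py u))) z = py (py (py (px u))) z := by
    intro z hz
    calc px (py (py (py u))) z = py (px (py (py u))) z := px_py_swap hU s_yy z hz
    _ = py (py (py (px u))) z := py_congr hU sw2 hz
  have sw4 : ∀ z ∈ U, px (py (px (px u))) z = py (px (px (px u))) z := px_py_swap hU s_xx
  have sw5 : ∀ z ∈ U, px (py (py (px u))) z = py (py (px (px u))) z := by
    intro z hz
    calc px (py (py (px u))) z = py (px (py (px u))) z := px_py_swap hU s_xy z hz
    _ = py (py (px (px u))) z := py_congr hU sw1 hz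
  -- x-direction slice derivatives, with canonical values
  have hAx : HasDerivAt (fun t => px (px u) (t, p.2)) (px (px (px u)) p) p.1 := hasDerivAt_px dA
  have hBx : HasDerivAt (fun t => py (px u) (t, p.2)) (py (px (px u)) p) p.1 := by
    have h := hasDerivAt_px dB; rwa [sw1 p hp] at h
  have hCx : HasDerivAt (fun t => py (py u) (t, p.2)) (py (py (px u)) p) p.1 := by
    have h := hasDerivAt_px dC; rwa [sw2 p hp] at h
  have hp3x : HasDerivAt (fun t => px (px (px u)) (t, p.2)) (px (px (px (px u))) p) p.1 :=
    hasDerivAt_px dp3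
  have hq3x : HasDerivAt (fun t => py (px (px u)) (t, p.2)) (py (px (px (px u))) p) p.1 := by
    have h := hasDerivAt_px dq3; rwa [sw4 p hp] at h
  have hr3x : HasDerivAt (fun t => py (py (px u)) (t, p.2)) (py (py (px (px u))) p) p.1 := by
    have h := hasDerivAt_px dr3; rwa [sw5 p hp] at h
  have hs3x : HasDerivAt (fun t => py (py (py u)) (t, p.2)) (py (py (py (px u))) p) p.1 := by
    have h := hasDerivAt_px ds3; rwa [sw3 p hp] at h
  -- y-direction slice derivatives (already canonical)
  have hAy : HasDerivAt (fun t => px (px u) (p.1, t)) (py (px (px u)) p) p.2 := hasDerivAt_py dA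
  have hBy : HasDerivAt (fun t => py (px u) (p.1, t)) (py (py (px u)) p) p.2 := hasDerivAt_py dB
  have hCy : HasDerivAt (fun t => py (py u) (p.1, t)) (py (py (py u)) p) p.2 := hasDerivAt_py dC
  have hp3y : HasDerivAt (fun t => px (px (px u)) (p.1, t)) (py (px (px (px u))) p) p.2 :=
    hasDerivAt_py dp3
  have hq3y : HasDerivAt (fun t => py (px (px u)) (p.1, t)) (py (py (px (px u))) p) p.2 :=
    hasDerivAt_py dq3
  have hr3y : HasDerivAt (fun t => py (py (px u)) (p.1, t)) (py (py (py (px u))) p) p.2 :=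
    hasDerivAt_py dr3
  have hs3y : HasDerivAt (fun t => py (py (py u)) (p.1, t)) (py (py (py (py u))) p) p.2 :=
    hasDerivAt_py ds3
  -- differentiated identities
  have hE1x := key_x hU (fun z => (px (px u) z)^2 * py (py (py u)) z
        - 3 * px (px u) z * py (py u) z * py (px (px u)) z
        + 2 * py (px u) z * py (py u) z * px (px (px u)) z) heq1 hp
    ((((hAx.pow 2).mul hs3x).sub (((hAx.const_mul 3).mul hCx).mul hq3x)).add
      (((hBx.const_mul 2).mul hCx).mul hp3x))
  have hE1y := key_y hU (fun z => (px (px u) z)^2 * py (py (py u)) z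
        - 3 * px (px u) z * py (py u) z * py (px (px u)) z
        + 2 * py (px u) z * py (py u) z * px (px (px u)) z) heq1 hp
    ((((hAy.pow 2).mul hs3y).sub (((hAy.const_mul 3).mul hCy).mul hq3y)).add
      (((hBy.const_mul 2).mul hCy).mul hp3y))
  have hE2x := key_x hU (fun z => (py (py u) z)^2 * px (px (px u)) z
        - 3 * px (px u) z * py (py u) z * py (py (px u)) z
        + 2 * py (px u) z * px (px u) z * py (py (py u)) z) heq2 hp
    ((((hCx.pow 2).mul hp3x).sub (((hAx.const_mul 3).mul hCx).mul hr3x)).add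
      (((hBx.const_mul 2).mul hAx).mul hs3x))
  have hE2y := key_y hU (fun z => (py (py u) z)^2 * px (px (px u)) z
        - 3 * px (px u) z * py (py u) z * py (py (px u)) z
        + 2 * py (px u) z * px (px u) z * py (py (py u)) z) heq2 hp
    ((((hCy.pow 2).mul hp3y).sub (((hAy.const_mul 3).mul hCy).mul hr3y)).add
      (((hBy.const_mul 2).mul hAy).mul hs3y))
  simp only [Pi.pow_apply, Pi.mul_apply, Prod.mk.eta] at hE1x hE1y hE2x hE2y
  have hE1 := heq1 p hp
  have hE2 := heq2 p hp
  -- nonvanishing of a and c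
  have hposp := hpos p hp
  have ha : px (px u) p ≠ 0 := by
    intro h
    rw [h] at hposp
    nlinarith [sq_nonneg (py (px u) p)]
  have hposp' := hpos p hp
  have hc : py (py u) p ≠ 0 := by
    intro h
    rw [h] at hposp'
    nlinarith [sq_nonneg (py (px u) p)]
  set a := px (px u) p with hadef
  set b := py (px u) p with hbdef
  set c := py (py u) p with hcdef
  set p3 := px (px (px u)) p
  set q3 := py (px (px u)) p
  set r3 := py (py (px u)) p
  set s3 := py (py (py u)) p
  set P4 := px (px (px (px u))) p
  set Q4 := py (px (px (px u))) p
  set R4 := py (py (px (px u))) p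
  set S4 := py (py (py (px u))) p
  set T4 := py (py (py (py u))) p
  have hC1 : 6*R4*a^2*c - P4*a*c^2 - 8*Q4*a*b*c + 4*P4*b^2*c - T4*a^3 = 0 := by
    have h : c * (6*R4*a^2*c - P4*a*c^2 - 8*Q4*a*b*c + 4*P4*b^2*c - T4*a^3) = 0 := by
      linear_combination (c*q3 - 2*b*r3) * hE1 + (a*r3) * hE2 + (2*b*c) * hE1x
        - (a*c) * hE1y - (a*c) * hE2x
    exact (mul_eq_zero.mp h).resolve_left hc
  have hC2 : 4*S4*a^2*c - 4*Q4*a*c^2 + 2*P4*b*c^2 - 2*a^2*b*T4 = 0 := by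
    linear_combination (-r3) * hE1 + q3 * hE2 + c * hE1x - a * hE2y
  refine ⟨P4 / a, (2 * Q4 * a - P4 * b) / a^2, T4 / c, ?_, ?_, ?_, ?_, ?_⟩
  · field_simp
  · field_simp
    ring
  · field_simp
    linear_combination hC1
  · field_simp
    linear_combination hC2
  · field_simp

end
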